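/- arXiv:2601.08677 — 4 statements merged into one kernel-verified Lean document; each statement's English description precedes it below -/
import Mathlib

section
/- Let K be an admissible kernel and let g ∈ L^∞(ℝⁿ) be ℤⁿ-periodic with ∫_Q g(x) dx = 0. Then for every measurable set F ⊆ ℝⁿ one has ∬_{Q×Q} χ_F(x) χ_{F^c}(y) K(x,y) dx dy + ∫_{Q∩F} g(x) dx ≥ (κ₃/2 − ‖g‖_{L^∞(ℝⁿ)}) · min{ |F ∩ Q|, |F^c ∩ Q| }. -/
open MeasureTheory ENNReal Filter Metric
open scoped RealInnerProductSpace Pointwise Topology NNReal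

noncomputable section

abbrev Euc (n : ℕ) := EuclideanSpace ℝ (Fin n)

/-- The open unit cube `(0,1)^n` in `ℝⁿ`. -/
def Qcube (n : ℕ) : Set (Euc n) := {x | ∀ i, x i ∈ Set.Ioo (0 : ℝ) 1}

/-- The centered open unit cube `(-1/2,1/2)^n` in `ℝⁿ`. -/
def QcubeC (n : ℕ) : Set (Euc n) := {x | ∀ i, x i ∈ Set.Ioo (-(1 : ℝ) / 2) (1 / 2)}

/-- The vector of `ℝⁿ` with integer coordinates given by `k : ℤⁿ`. -/
def intVec {n : ℕ} (k : Fin n → ℤ) : Euc n :=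
  (WithLp.equiv 2 (Fin n → ℝ)).symm fun i => (k i : ℝ)

/-- `ℤⁿ`-periodicity of a function on `ℝⁿ`. -/
def ZPeriodic {n : ℕ} (f : Euc n → ℝ) : Prop :=
  ∀ (k : Fin n → ℤ) (x : Euc n), f (x + intVec k) = f x

/-- An admissible kernel: nonnegative, symmetric, translation and rotation invariant,
with first-moment integrability, the two-sided fractional bounds, and a positive
lower bound on `Q × Q`. -/
structure IsAdmissibleKernel (n : ℕ) (s₁ s₂ δ κ₁ κ₂ κ₃ : ℝ)
    (K : Euc n → Euc n → ℝ) : Prop where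
  nonneg : ∀ x y, 0 ≤ K x y
  symm : ∀ x y, K x y = K y x
  transl : ∀ x y w, K (x + w) (y + w) = K x y
  rot : ∀ (R : Euc n ≃ₗᵢ[ℝ] Euc n) (x y : Euc n), K (R x) (R y) = K x y
  int_fin : (∫⁻ h : Euc n, ENNReal.ofReal (‖h‖ * K h 0)) < ⊤
  s₁_pos : 0 < s₁
  s₁_lt : s₁ < 1 / 2
  s₂_gt : 1 / 2 < s₂
  s₂_lt : s₂ < 1
  δ_pos : 0 < δ
  κ₁_pos : 0 < κ₁
  κ₂_pos : 0 < κ₂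
  κ₃_pos : 0 < κ₃
  κ₁_le_κ₂ : κ₁ ≤ κ₂
  lower : ∀ x y : Euc n, 0 < ‖x - y‖ → ‖x - y‖ < δ →
    κ₁ / ‖x - y‖ ^ ((n : ℝ) + 2 * s₁) ≤ K x y
  upper : ∀ x y : Euc n, x ≠ y →
    K x y ≤ κ₂ * min (1 / ‖x - y‖ ^ ((n : ℝ) + 2 * s₁)) (1 / ‖x - y‖ ^ ((n : ℝ) + 2 * s₂))
  lowerQ : ∀ x ∈ Qcube n, ∀ y ∈ Qcube n, κ₃ ≤ K x y

/-- The class `𝒲` of locally integrable, `ℤⁿ`-periodic functions with zero average on `Q`. -/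
def MemW {n : ℕ} (u : Euc n → ℝ) : Prop :=
  MeasureTheory.LocallyIntegrable u volume ∧ ZPeriodic u ∧ (∫ x in Qcube n, u x) = 0

/-- The cell energy `𝔈ₚ(u)`, valued in `EReal`. -/
def cellEnergy {n : ℕ} (K : Euc n → Euc n → ℝ) (g : Euc n → ℝ) (p : Euc n)
    (u : Euc n → ℝ) : EReal :=
  ((∫⁻ x in Qcube n, ∫⁻ y : Euc n,
      ENNReal.ofReal (|u x - u y + ⟪p, x - y⟫| / 2 * K x y) : ℝ≥0∞) : EReal)
    + (((∫ x in Qcube n, g x * u x) : ℝ) : EReal)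

/-- `u` is a minimizer of the cell energy `𝔈ₚ` over `𝒲`. -/
def IsCellMinimizer {n : ℕ} (K : Euc n → Euc n → ℝ) (g : Euc n → ℝ) (p : Euc n)
    (u : Euc n → ℝ) : Prop :=
  MemW u ∧ ∀ w : Euc n → ℝ, MemW w → cellEnergy K g p u ≤ cellEnergy K g p w

/-- Real-valued indicator function of a set. -/
def setInd {n : ℕ} (E : Set (Euc n)) (x : Euc n) : ℝ := Set.indicator E (fun _ => (1 : ℝ)) x

/-- `Ω_♯ = (Ω×Ω) ∪ (Ωᶜ×Ω) ∪ (Ω×Ωᶜ)`. -/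
def sharpSet {n : ℕ} (Ω : Set (Euc n)) : Set (Euc n × Euc n) :=
  (Ω ×ˢ Ω) ∪ (Ωᶜ ×ˢ Ω) ∪ (Ω ×ˢ Ωᶜ)

/-- The `K`-nonlocal perimeter of `E` relative to `Ω`. -/
def perK {n : ℕ} (K : Euc n → Euc n → ℝ) (E Ω : Set (Euc n)) : ℝ≥0∞ :=
  ∫⁻ q in sharpSet Ω, ENNReal.ofReal (|setInd E q.1 - setInd E q.2| / 2 * K q.1 q.2)

/-- The functional `J(E,Ω) = P_K(E,Ω) + ∫_{E∩Ω} g`. -/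
def energyJ {n : ℕ} (K : Euc n → Euc n → ℝ) (g : Euc n → ℝ) (E Ω : Set (Euc n)) : EReal :=
  (perK K E Ω : EReal) + (((∫ x in E ∩ Ω, g x) : ℝ) : EReal)

/-- Class-A minimality for `J`. -/
def IsClassAMinimizer {n : ℕ} (K : Euc n → Euc n → ℝ) (g : Euc n → ℝ)
    (E : Set (Euc n)) : Prop :=
  ∀ Ω : Set (Euc n), IsOpen Ω → Bornology.IsBounded Ω →
    ∀ F : Set (Euc n), MeasurableSet F → F \ Ω = E \ Ω →
      energyJ K g E Ω ≤ energyJ K g F Ω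

/-- Integer translate `k + Q` of the unit cube. -/
def cubeTrans {n : ℕ} (k : Fin n → ℤ) : Set (Euc n) := (fun x => x + intVec k) '' Qcube n

/-- `𝒬(Ω)₁`: the union of the integer translates of the unit cube contained in `Ω`. -/
def unitCubes (n : ℕ) (Ω : Set (Euc n)) : Set (Euc n) :=
  ⋃ k ∈ {k : Fin n → ℤ | cubeTrans k ⊆ Ω}, cubeTrans k

/-- The functional `ℱ(E,Ω) = P_K(E,Ω) + ∫_{E∩𝒬(Ω)₁} g`. -/
def energyF {n : ℕ} (K : Euc n → Euc n → ℝ) (g : Euc n → ℝ) (E Ω : Set (Euc n)) : EReal :=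
  (perK K E Ω : EReal) + (((∫ x in E ∩ unitCubes n Ω, g x) : ℝ) : EReal)

/-- Rescaled kernel `K_ε(x,y) = ε^{-n-1} K(x/ε, y/ε)`. -/
def Keps {n : ℕ} (K : Euc n → Euc n → ℝ) (ε : ℝ) : Euc n → Euc n → ℝ :=
  fun x y => ε ^ (-(n : ℝ) - 1) * K (ε⁻¹ • x) (ε⁻¹ • y)

/-- Rescaled forcing term `g_ε(x) = ε⁻¹ g(x/ε)`. -/
def geps {n : ℕ} (g : Euc n → ℝ) (ε : ℝ) : Euc n → ℝ := fun x => ε⁻¹ * g (ε⁻¹ • x)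

/-- The rescaled cube `ε(k + Q)`. -/
def cubeTransEps {n : ℕ} (ε : ℝ) (k : Fin n → ℤ) : Set (Euc n) :=
  (fun x => ε • (x + intVec k)) '' Qcube n

/-- `𝒬(Ω)_ε`: the union of the cubes `ε(k+Q)` contained in `Ω`. -/
def unitCubesEps (n : ℕ) (ε : ℝ) (Ω : Set (Euc n)) : Set (Euc n) :=
  ⋃ k ∈ {k : Fin n → ℤ | cubeTransEps ε k ⊆ Ω}, cubeTransEps ε k

/-- The rescaled functional `ℱ_ε(E,Ω) = P_{K_ε}(E,Ω) + ∫_{𝒬(Ω)_ε ∩ E} g_ε`. -/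
def energyFeps {n : ℕ} (K : Euc n → Euc n → ℝ) (g : Euc n → ℝ) (ε : ℝ)
    (E Ω : Set (Euc n)) : EReal :=
  (perK (Keps K ε) E Ω : EReal) + (((∫ x in unitCubesEps n ε Ω ∩ E, geps g ε x) : ℝ) : EReal)

/-- A planelike minimizer for `J` in direction `p` (a unit vector), with width `M`. -/
def IsPlanelike {n : ℕ} (K : Euc n → Euc n → ℝ) (g : Euc n → ℝ) (p : Euc n) (M : ℝ)
    (E : Set (Euc n)) : Prop :=
  IsClassAMinimizer K g E ∧
    (({x : Euc n | ⟪x, p⟫ ≤ -M} ⊆ E ∧ E ⊆ {x : Euc n | ⟪x, p⟫ ≤ M}) ∨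
      ({x : Euc n | M ≤ ⟪x, p⟫} ⊆ E ∧ E ⊆ {x : Euc n | -M ≤ ⟪x, p⟫}))

/-- An open set has Lipschitz boundary: near every boundary point, after choosing a unit
direction `ν`, the set coincides locally with the subgraph of a Lipschitz function of the
tangential component. -/
def HasLipschitzBoundary {n : ℕ} (Ω : Set (Euc n)) : Prop :=
  ∀ x₀ ∈ frontier Ω, ∃ ν : Euc n, ‖ν‖ = 1 ∧
    ∃ r : ℝ, 0 < r ∧ ∃ (L : ℝ≥0) (φ : Euc n → ℝ), LipschitzWith L φ ∧
      ∀ x ∈ Metric.ball x₀ r,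
        (x ∈ Ω ↔ ⟪x - x₀, ν⟫ < φ (x - x₀ - ⟪x - x₀, ν⟫ • ν))

/-- The essential oscillation over the unit cube `Q`. -/
def oscQ {n : ℕ} (φ : Euc n → ℝ) : ℝ :=
  essSup φ (volume.restrict (Qcube n)) - essInf φ (volume.restrict (Qcube n))

/-- `(Λ,ξ)`-minimality for the perimeter `P_K` in `Ω`. -/
def IsAlmostMinimal {n : ℕ} (K : Euc n → Euc n → ℝ) (Λ ξ : ℝ) (E Ω : Set (Euc n)) : Prop :=
  ∀ F : Set (Euc n), MeasurableSet F → F \ Ω = E \ Ω →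
    perK K E Ω ≤ perK K F Ω + ENNReal.ofReal Λ * volume (symmDiff E F) ^ (1 - ξ)

/-- The slab `A_{L₁,L₂,R}` around the hyperplane orthogonal to `p`. -/
def slabA {n : ℕ} (p : Euc n) (L₁ L₂ R : ℝ) : Set (Euc n) :=
  {x | L₁ < |⟪x, p⟫| ∧ |⟪x, p⟫| < L₂ ∧ ‖x - ⟪x, p⟫ • p‖ < R}


/-- The standing assumptions on the forcing term `g`: bounded (in `L^∞`),
`ℤⁿ`-periodic and with zero average on the unit cube. -/
def GoodForcing {n : ℕ} (g : Euc n → ℝ) : Prop :=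
  MeasureTheory.MemLp g ⊤ (volume : Measure (Euc n)) ∧ ZPeriodic g ∧
    (∫ x in Qcube n, g x) = 0


/-!
Write `a = |F ∩ Q|` and `b = |Fᶜ ∩ Q|`, so that `a + b = 1`. Since `K ≥ κ₃` on `Q × Q`, the
interaction term is at least `κ₃ a b ≥ (κ₃ / 2) min{a, b}`, because `max{a, b} ≥ 1/2`. Since `g` has
zero average on `Q`, `∫_{Q∩F} g = -∫_{Q\F} g`, so this integral is bounded below both by `-‖g‖∞ a`
and by `-‖g‖∞ b`.
-/

lemma measurableSet_Qcube (n : ℕ) : MeasurableSet (Qcube n) := by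
  have h : Qcube n = ⋂ i, (fun x : Euc n => x i) ⁻¹' Set.Ioo (0 : ℝ) 1 := by
    ext x; simp [Qcube]
  rw [h]
  exact MeasurableSet.iInter fun i =>
    ((continuous_apply i).comp (PiLp.continuous_ofLp ..)).measurable measurableSet_Ioo

lemma volume_Qcube (n : ℕ) : volume (Qcube n) = 1 := by
  have h : Qcube n = (MeasurableEquiv.toLp 2 (Fin n → ℝ)).symm ⁻¹'
      (Set.univ.pi fun _ => Set.Ioo (0 : ℝ) 1) := by
    ext x; simp [Qcube]
  rw [h, (EuclideanSpace.volume_preserving_symm_measurableEquiv_toLp (Fin n)).measure_preimage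
    (MeasurableSet.univ_pi fun _ => measurableSet_Ioo).nullMeasurableSet]
  simp [volume_pi_pi, Real.volume_Ioo]

lemma EReal.coe_le_coe_ennreal_of_ofReal_le {r : ℝ} {x : ℝ≥0∞} (h : ENNReal.ofReal r ≤ x) :
    (r : EReal) ≤ x :=
  calc (r : EReal) ≤ max (r : EReal) 0 := le_max_left _ _
    _ = (ENNReal.ofReal r : EReal) := EReal.coe_ennreal_ofReal.symm
    _ ≤ x := EReal.coe_ennreal_le_coe_ennreal_iff.2 h

section

variable {α β : Type*} [MeasurableSpace α] [MeasurableSpace β] {μ : Measure α} {ν : Measure β}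

theorem ofReal_mul_measureReal_mul_measureReal_le_setLIntegral_setLIntegral {s : Set α}
    {t : Set β} (hs : MeasurableSet s) (ht : MeasurableSet t) (hμs : μ s ≠ ∞) (hνt : ν t ≠ ∞)
    {c : ℝ} {K : α → β → ℝ} (hK : ∀ x ∈ s, ∀ y ∈ t, c ≤ K x y) :
    ENNReal.ofReal (c * μ.real s * ν.real t)
      ≤ ∫⁻ x in s, ∫⁻ y in t, ENNReal.ofReal (K x y) ∂ν ∂μ := by
  rw [mul_assoc, ENNReal.ofReal_mul' (by positivity), ENNReal.ofReal_mul measureReal_nonneg,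
    ofReal_measureReal hμs, ofReal_measureReal hνt, mul_comm (μ s), ← mul_assoc,
    ← setLIntegral_const s]
  refine setLIntegral_mono' hs fun x hx => ?_
  rw [← setLIntegral_const t]
  exact setLIntegral_mono' ht fun y hy => ENNReal.ofReal_le_ofReal (hK x hx y hy)

theorem neg_mul_min_le_setIntegral_inter_of_setIntegral_eq_zero {Q F : Set α} {g : α → ℝ}
    {C : ℝ} (hQ : μ Q ≠ ∞) (hF : MeasurableSet F) (hg : AEStronglyMeasurable g μ)
    (hgC : ∀ᵐ x ∂μ, ‖g x‖ ≤ C) (hg0 : ∫ x in Q, g x ∂μ = 0) :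
    -(C * min (μ.real (Q ∩ F)) (μ.real (Q \ F))) ≤ ∫ x in Q ∩ F, g x ∂μ := by
  have bound : ∀ S ⊆ Q, |∫ x in S, g x ∂μ| ≤ C * μ.real S := fun S hS =>
    norm_setIntegral_le_of_norm_le_const_ae (measure_mono hS |>.trans_lt hQ.lt_top)
      (ae_restrict_of_ae hgC)
  have split := integral_inter_add_sdiff hF
    (Measure.integrableOn_of_bounded hQ hg (ae_restrict_of_ae hgC))
  have inter := abs_le.1 (bound (Q ∩ F) Set.inter_subset_left)
  have sdiff := abs_le.1 (bound (Q \ F) Set.sdiff_subset)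
  rcases min_choice (μ.real (Q ∩ F)) (μ.real (Q \ F)) with h | h <;> rw [h] <;> linarith

end

lemma half_mul_min_le_mul_mul {κ a b : ℝ} (hκ : 0 ≤ κ) (ha : 0 ≤ a) (hb : 0 ≤ b)
    (hab : a + b = 1) : κ / 2 * min a b ≤ κ * a * b := by
  rcases le_total a b with h | h
  · rw [min_eq_left h]
    nlinarith [mul_nonneg hκ (mul_nonneg ha (by linarith : (0 : ℝ) ≤ b - 1 / 2))]
  · rw [min_eq_right h]
    nlinarith [mul_nonneg hκ (mul_nonneg hb (by linarith : (0 : ℝ) ≤ a - 1 / 2))]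

theorem energy_lower_bound_on_unit_cube_general
    (n : ℕ) (s₁ s₂ δ κ₁ κ₂ κ₃ : ℝ)
    (K : Euc n → Euc n → ℝ) (hK : IsAdmissibleKernel n s₁ s₂ δ κ₁ κ₂ κ₃ K)
    (g : Euc n → ℝ) (hg : GoodForcing g)
    (F : Set (Euc n)) (hF : MeasurableSet F) :
    (((κ₃ / 2 - (eLpNorm g ⊤ (volume : Measure (Euc n))).toReal)
        * min (volume (F ∩ Qcube n)).toReal (volume (Fᶜ ∩ Qcube n)).toReal : ℝ) : EReal)
      ≤ ((∫⁻ x in F ∩ Qcube n, ∫⁻ y in Fᶜ ∩ Qcube n, ENNReal.ofReal (K x y)) : EReal)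
        + (((∫ x in Qcube n ∩ F, g x) : ℝ) : EReal) := by
  obtain ⟨hg_bdd, -, hg0⟩ := hg
  have hQ : volume (Qcube n) ≠ ∞ := by simp [volume_Qcube]
  rw [Set.inter_comm F, ← Set.sdiff_eq_compl_inter, ← measureReal_def, ← measureReal_def]
  have hab : volume.real (Qcube n ∩ F) + volume.real (Qcube n \ F) = 1 := by
    rw [measureReal_inter_add_sdiff hF hQ, measureReal_def, volume_Qcube, ENNReal.toReal_one]
  have interaction := EReal.coe_le_coe_ennreal_of_ofReal_le <|
    ofReal_mul_measureReal_mul_measureReal_le_setLIntegral_setLIntegral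
      ((measurableSet_Qcube n).inter hF) (MeasurableSet.diff (measurableSet_Qcube n) hF)
      (measure_ne_top_of_subset Set.inter_subset_left hQ)
      (measure_ne_top_of_subset Set.sdiff_subset hQ) (fun x hx y hy => hK.lowerQ x hx.1 y hy.1)
  have hgC : ∀ᵐ x ∂volume, ‖g x‖ ≤ (eLpNorm g ⊤ volume).toReal := by
    simpa only [toReal_eLpNorm hg_bdd.1] using ae_le_lpNorm_exponent_top hg_bdd
  have forcing := neg_mul_min_le_setIntegral_inter_of_setIntegral_eq_zero hQ hF hg_bdd.1 hgC hg0
  have hκ := half_mul_min_le_mul_mul hK.κ₃_pos.le measureReal_nonneg measureReal_nonneg hab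
  calc _ ≤ ((κ₃ * volume.real (Qcube n ∩ F) * volume.real (Qcube n \ F)
          + ∫ x in Qcube n ∩ F, g x : ℝ) : EReal) := EReal.coe_le_coe_iff.2 (by linarith)
    _ ≤ _ := by rw [EReal.coe_add]; exact add_le_add_left interaction _

/-- Energy lower bound on the unit cube. -/
theorem energy_lower_bound_on_unit_cube
    (n : ℕ) (hn : 1 ≤ n) (s₁ s₂ δ κ₁ κ₂ κ₃ : ℝ)
    (K : Euc n → Euc n → ℝ) (hK : IsAdmissibleKernel n s₁ s₂ δ κ₁ κ₂ κ₃ K)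
    (g : Euc n → ℝ) (hg : GoodForcing g)
    (F : Set (Euc n)) (hF : MeasurableSet F) :
    (((κ₃ / 2 - (eLpNorm g ⊤ (volume : Measure (Euc n))).toReal)
        * min (volume (F ∩ Qcube n)).toReal (volume (Fᶜ ∩ Qcube n)).toReal : ℝ) : EReal)
      ≤ ((∫⁻ x in F ∩ Qcube n, ∫⁻ y in Fᶜ ∩ Qcube n, ENNReal.ofReal (K x y)) : EReal)
        + (((∫ x in Qcube n ∩ F, g x) : ℝ) : EReal) :=
  energy_lower_bound_on_unit_cube_general n s₁ s₂ δ κ₁ κ₂ κ₃ K hK g hg F hF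
end
end

section
/- Let K be an admissible kernel, let g ∈ L^∞(ℝⁿ) be ℤⁿ-periodic with ∫_Q g(x) dx = 0, let p ∈ S^{n−1}, and let E ⊆ ℝⁿ be a measurable set with ∂E ⊆ { x ∈ ℝⁿ : |x·p| ≤ M } for some M > 0. Let α ∈ (0, 2s₂ − 1). Then lim_{R→+∞} R^{1−n} ℱ(E, A_{R, R^{1+α}, R}) = 0, where A_{L₁,L₂,R} := { x ∈ ℝⁿ : L₁ < |x·p| < L₂ and |x − (x·p)p| < R }. -/
open MeasureTheory ENNReal Filter Metric
open scoped RealInnerProductSpace Pointwise Topology NNReal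

noncomputable section

/-!
Once `R ≥ 2M`, every point of the slab `A = A_{R, R^{1+α}, R}` is at distance at least `R/2`
from `∂E`. A unit cube inside `A` is connected and misses `∂E`, so it lies in `E` or in its
complement; by periodicity and zero average the forcing term of `ℱ(E, A)` vanishes. If `1_E`
differs at `x` and `y`, the segment `[x, y]` meets `∂E`; so when one of the points is in `A`,
`|x - y| ≥ R/2`, and the bound `K ≤ κ₂ |x - y|^{-n-2s₂}` gives
`P_K(E, A) ≤ 2 |A| κ₂ ∫_{|h| ≥ R/2} |h|^{-n-2s₂} dh ≲ |A| R^{-2s₂}`. Covering `A` by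
`≈ R^α` balls of radius `2R` gives `|A| ≲ R^{n+α}`, hence `R^{1-n} ℱ(E, A) ≲ R^{1+α-2s₂} → 0`.
-/

open Set Metric

theorem IsPreconnected.subset_or_disjoint_of_disjoint_frontier {X : Type*} [TopologicalSpace X]
    {s E : Set X} (hs : IsPreconnected s) (hE : Disjoint s (frontier E)) :
    s ⊆ E ∨ Disjoint s E := by
  have hcover : s ⊆ interior E ∪ (closure E)ᶜ := fun z hz => by
    by_contra h
    simp only [mem_union, mem_compl_iff, not_or, not_not] at h
    exact disjoint_left.1 hE hz ⟨h.2, h.1⟩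
  rcases hs.subset_or_subset isOpen_interior isClosed_closure.isOpen_compl
      (disjoint_compl_right.mono_left interior_subset_closure) hcover with h | h
  · exact .inl (h.trans interior_subset)
  · exact .inr (disjoint_left.2 fun _ hx hxE => h hx (subset_closure hxE))

theorem exists_mem_segment_mem_frontier {F : Type*} [NormedAddCommGroup F] [NormedSpace ℝ F]
    {E : Set F} {x y : F} (hx : x ∈ E) (hy : y ∉ E) :
    ∃ z ∈ segment ℝ x y, z ∈ frontier E := by
  by_contra! h
  rcases (convex_segment x y).isPreconnected.subset_or_disjoint_of_disjoint_frontier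
      (E := E) (disjoint_left.2 h) with hs | hs
  · exact hy (hs (right_mem_segment ℝ x y))
  · exact disjoint_left.1 hs (left_mem_segment ℝ x y) hx

section Cubes

variable {n : ℕ}

@[simp] lemma intVec_apply (k : Fin n → ℤ) (i : Fin n) : intVec k i = k i := rfl

lemma mem_cubeTrans {k : Fin n → ℤ} {x : Euc n} :
    x ∈ cubeTrans k ↔ ∀ i, x i ∈ Ioo (k i : ℝ) (k i + 1) := by
  constructor
  · rintro ⟨y, hy, rfl⟩ i
    have := hy i
    simp only [mem_Ioo, PiLp.add_apply, intVec_apply] at this ⊢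
    constructor <;> linarith
  · intro h
    refine ⟨x - intVec k, fun i => ?_, sub_add_cancel x _⟩
    have := h i
    simp only [mem_Ioo, PiLp.sub_apply, intVec_apply] at this ⊢
    constructor <;> linarith

lemma isPreconnected_cubeTrans (k : Fin n → ℤ) : IsPreconnected (cubeTrans k) := by
  have hQ : Convex ℝ (Qcube n) := by
    have : Qcube n = ⋂ i, (EuclideanSpace.proj i : Euc n →L[ℝ] ℝ) ⁻¹' Ioo 0 1 := by
      ext x; simp [Qcube]
    rw [this]
    exact convex_iInter fun i => (convex_Ioo 0 1).linear_preimage _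
  have : cubeTrans k = (fun x => intVec k + x) '' Qcube n := by
    simp only [cubeTrans, add_comm]
  exact this ▸ (hQ.translate _).isPreconnected

lemma measurableSet_cubeTrans (k : Fin n → ℤ) : MeasurableSet (cubeTrans k) := by
  have : cubeTrans k = ⋂ i, (fun x : Euc n => x i) ⁻¹' Ioo (k i : ℝ) (k i + 1) := by
    ext x; simp [mem_cubeTrans]
  rw [this]
  exact .iInter fun i => measurableSet_Ioo.preimage (by fun_prop)

lemma pairwise_disjoint_cubeTrans :
    Pairwise (Function.onFun Disjoint (cubeTrans : (Fin n → ℤ) → Set (Euc n))) := by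
  intro k k' hkk'
  refine disjoint_left.2 fun x hx hx' => hkk' (funext fun i => ?_)
  have hfl : ∀ {m : Fin n → ℤ}, x ∈ cubeTrans m → ⌊x i⌋ = m i := fun hm =>
    Int.floor_eq_iff.2 ⟨(mem_cubeTrans.1 hm i).1.le, (mem_cubeTrans.1 hm i).2⟩
  rw [← hfl hx, ← hfl hx']

lemma setIntegral_cubeTrans {g : Euc n → ℝ} (hg : ZPeriodic g) (k : Fin n → ℤ) :
    ∫ x in cubeTrans k, g x = ∫ x in Qcube n, g x := by
  rw [cubeTrans, (measurePreserving_add_right volume (intVec k)).setIntegral_image_emb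
    (MeasurableEquiv.addRight (intVec k)).measurableEmbedding]
  simp only [hg k]

lemma unitCubes_subset (Ω : Set (Euc n)) : unitCubes n Ω ⊆ Ω :=
  iUnion₂_subset fun _ hk => hk

lemma GoodForcing.memW {g : Euc n → ℝ} (hg : GoodForcing g) : MemW g :=
  ⟨hg.1.locallyIntegrable le_top, hg.2⟩

lemma setIntegral_inter_unitCubes_eq_zero {g : Euc n → ℝ} (hg : MemW g) {E Ω : Set (Euc n)}
    (hΩ : Bornology.IsBounded Ω) (hE : Disjoint Ω (frontier E)) :
    ∫ x in E ∩ unitCubes n Ω, g x = 0 := by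
  let ι := {k : Fin n → ℤ // cubeTrans k ⊆ Ω}
  have hcube (k : ι) : E ∩ cubeTrans k.1 = cubeTrans k.1 ∨ E ∩ cubeTrans k.1 = ∅ :=
    ((isPreconnected_cubeTrans k.1).subset_or_disjoint_of_disjoint_frontier
      (hE.mono_left k.2)).imp inter_eq_right.2 fun h => h.symm.inter_eq
  have hunion : E ∩ unitCubes n Ω = ⋃ k : ι, E ∩ cubeTrans k.1 := by
    rw [unitCubes, biUnion_eq_iUnion, inter_iUnion]; rfl
  obtain ⟨r, hr⟩ := hΩ.subset_closedBall 0
  have hint : IntegrableOn g (E ∩ unitCubes n Ω) :=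
    (hg.1.integrableOn_isCompact (isCompact_closedBall 0 r)).mono_set
      (inter_subset_right.trans ((unitCubes_subset Ω).trans hr))
  rw [hunion] at hint ⊢
  rw [integral_iUnion (fun k => ?_) (fun k k' h => ?_) hint]
  · refine (tsum_congr fun k => ?_).trans tsum_zero
    rcases hcube k with h | h <;> rw [h]
    · rw [setIntegral_cubeTrans hg.2.1, hg.2.2]
    · exact setIntegral_empty
  · rcases hcube k with h | h <;> rw [h]
    · exact measurableSet_cubeTrans k.1
    · exact MeasurableSet.empty
  · exact (pairwise_disjoint_cubeTrans (Subtype.coe_injective.ne h)).mono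
      inter_subset_right inter_subset_right

end Cubes

section Scaling

open Module

variable {F : Type*} [NormedAddCommGroup F] [NormedSpace ℝ F] [MeasurableSpace F] [BorelSpace F]
  [FiniteDimensional ℝ F] (μ : Measure F) [μ.IsAddHaarMeasure]

theorem lintegral_comp_smul_addHaar (f : F → ℝ≥0∞) {r : ℝ} (hr : r ≠ 0) :
    ∫⁻ x, f (r • x) ∂μ = ENNReal.ofReal |(r ^ finrank ℝ F)⁻¹| * ∫⁻ x, f x ∂μ := by
  rw [← smul_eq_mul, ← lintegral_smul_measure, ← Measure.map_addHaar_smul μ hr]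
  exact (lintegral_map_equiv f (Homeomorph.smulOfNeZero r hr).toMeasurableEquiv).symm

theorem setLIntegral_compl_ball_rpow_neg {q r : ℝ} (hr : 0 < r) :
    ∫⁻ h in (ball 0 r)ᶜ, ENNReal.ofReal (‖h‖ ^ (-q)) ∂μ =
      ENNReal.ofReal (r ^ ((finrank ℝ F : ℝ) - q)) *
        ∫⁻ h in (ball 0 1)ᶜ, ENNReal.ofReal (‖h‖ ^ (-q)) ∂μ := by
  have hscale (h : F) : (ball 0 r)ᶜ.indicator (fun h => ENNReal.ofReal (‖h‖ ^ (-q))) h =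
      ENNReal.ofReal (r ^ (-q)) *
        (ball 0 1)ᶜ.indicator (fun h => ENNReal.ofReal (‖h‖ ^ (-q))) (r⁻¹ • h) := by
    have hmem : r⁻¹ • h ∈ ball (0 : F) 1 ↔ h ∈ ball 0 r := by
      simp only [mem_ball_zero_iff, norm_smul, norm_inv, Real.norm_of_nonneg hr.le,
        inv_mul_lt_iff₀ hr, mul_one]
    by_cases hh : h ∈ ball (0 : F) r
    · simp [hh, hmem]
    · simp only [indicator_of_mem (mem_compl hh), indicator_of_mem (mem_compl (hmem.not.2 hh)),
        norm_smul, norm_inv, Real.norm_of_nonneg hr.le]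
      rw [← ENNReal.ofReal_mul (by positivity), Real.mul_rpow (by positivity) (norm_nonneg _),
        Real.inv_rpow hr.le, mul_inv_cancel_left₀ (by positivity)]
  simp_rw [← lintegral_indicator measurableSet_ball.compl, hscale]
  rw [lintegral_const_mul' _ _ ENNReal.ofReal_ne_top,
    lintegral_comp_smul_addHaar μ _ (inv_ne_zero hr.ne'), ← mul_assoc,
    ← ENNReal.ofReal_mul (by positivity)]
  congr 2
  rw [inv_pow, inv_inv, abs_of_pos (by positivity), ← Real.rpow_natCast, ← Real.rpow_add hr]
  ring_nf

theorem setLIntegral_compl_ball_rpow_neg_lt_top {q : ℝ} (hq : (finrank ℝ F : ℝ) < q) :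
    ∫⁻ h in (ball 0 1)ᶜ, ENNReal.ofReal (‖h‖ ^ (-q)) ∂μ < ⊤ := by
  have hq0 : 0 < q := (Nat.cast_nonneg _).trans_lt hq
  have hle : ∀ h ∈ (ball (0 : F) 1)ᶜ,
      ENNReal.ofReal (‖h‖ ^ (-q)) ≤
        ENNReal.ofReal (2 ^ q) * ENNReal.ofReal ((1 + ‖h‖) ^ (-q)) := by
    intro h hh
    have h1 : 1 ≤ ‖h‖ := by simpa using hh
    rw [← ENNReal.ofReal_mul (by positivity)]
    refine ENNReal.ofReal_le_ofReal ?_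
    -- `1 + ‖h‖ ≤ 2 ‖h‖` outside the unit ball
    calc ‖h‖ ^ (-q) = 2 ^ q * (2 * ‖h‖) ^ (-q) := by
          rw [Real.mul_rpow zero_le_two (norm_nonneg h), ← mul_assoc, ← Real.rpow_add two_pos]
          simp
      _ ≤ 2 ^ q * (1 + ‖h‖) ^ (-q) := by
          refine mul_le_mul_of_nonneg_left ?_ (by positivity)
          exact Real.rpow_le_rpow_of_nonpos (by positivity) (by linarith) (by linarith)
  calc ∫⁻ h in (ball 0 1)ᶜ, ENNReal.ofReal (‖h‖ ^ (-q)) ∂μ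
      ≤ ∫⁻ h in (ball 0 1)ᶜ, ENNReal.ofReal (2 ^ q) * ENNReal.ofReal ((1 + ‖h‖) ^ (-q)) ∂μ :=
        setLIntegral_mono' measurableSet_ball.compl hle
    _ ≤ ENNReal.ofReal (2 ^ q) * ∫⁻ h, ENNReal.ofReal ((1 + ‖h‖) ^ (-q)) ∂μ := by
        rw [lintegral_const_mul' _ _ ENNReal.ofReal_ne_top]
        gcongr
        exact Measure.restrict_le_self
    _ < ⊤ := ENNReal.mul_lt_top ENNReal.ofReal_lt_top (finite_integral_one_add_norm hq)

end Scaling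

section Perimeter

variable {n : ℕ}

lemma lintegral_sharpSet_sub_le (Ω : Set (Euc n)) (f : Euc n → ℝ≥0∞) :
    ∫⁻ z in sharpSet Ω, f (z.1 - z.2) ≤ 2 * volume Ω * ∫⁻ h, f h := by
  have hsub : sharpSet Ω ⊆ Ω ×ˢ univ ∪ univ ×ˢ Ω := by
    rintro ⟨x, y⟩ ((h | h) | h)
    exacts [.inl ⟨h.1, trivial⟩, .inr ⟨trivial, h.2⟩, .inl ⟨h.1, trivial⟩]
  have hleft : ∫⁻ z in Ω ×ˢ univ, f (z.1 - z.2) ≤ volume Ω * ∫⁻ h, f h := by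
    rw [Measure.volume_eq_prod, ← Measure.prod_restrict, Measure.restrict_univ]
    refine (lintegral_prod_le _).trans_eq ?_
    simp_rw [lintegral_sub_left_eq_self, lintegral_const, Measure.restrict_apply_univ, mul_comm]
  have hright : ∫⁻ z in univ ×ˢ Ω, f (z.1 - z.2) ≤ volume Ω * ∫⁻ h, f h := by
    rw [Measure.volume_eq_prod, ← Measure.prod_restrict, Measure.restrict_univ,
      ← lintegral_prod_swap]
    refine (lintegral_prod_le _).trans_eq ?_
    simp_rw [Prod.fst_swap, Prod.snd_swap, lintegral_sub_right_eq_self, lintegral_const,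
      Measure.restrict_apply_univ, mul_comm]
  calc ∫⁻ z in sharpSet Ω, f (z.1 - z.2)
      ≤ ∫⁻ z in Ω ×ˢ univ ∪ univ ×ˢ Ω, f (z.1 - z.2) := lintegral_mono_set hsub
    _ ≤ (∫⁻ z in Ω ×ˢ univ, f (z.1 - z.2)) + ∫⁻ z in univ ×ˢ Ω, f (z.1 - z.2) :=
        lintegral_union_le _ _ _
    _ ≤ 2 * volume Ω * ∫⁻ h, f h := by
        rw [two_mul, add_mul]; exact add_le_add hleft hright

lemma abs_setInd_sub_le_one (E : Set (Euc n)) (x y : Euc n) :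
    |setInd E x - setInd E y| ≤ 1 := by
  by_cases hx : x ∈ E <;> by_cases hy : y ∈ E <;> simp [setInd, hx, hy]

lemma le_norm_sub_of_setInd_ne {E Ω : Set (Euc n)} {r : ℝ}
    (hsep : ∀ x ∈ Ω, ∀ z ∈ frontier E, r ≤ ‖x - z‖) {x y : Euc n} (hxy : x ∈ Ω ∨ y ∈ Ω)
    (hne : setInd E x ≠ setInd E y) : r ≤ ‖x - y‖ := by
  obtain ⟨z, hz, hzE⟩ : ∃ z ∈ segment ℝ x y, z ∈ frontier E := by
    by_cases hx : x ∈ E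
    · exact exists_mem_segment_mem_frontier hx fun hy => hne (by simp [setInd, hx, hy])
    · have hy : y ∈ E := by_contra fun hy => hne (by simp [setInd, hx, hy])
      rw [segment_symm]
      exact exists_mem_segment_mem_frontier hy hx
  have hdist := dist_add_dist_of_mem_segment hz
  simp only [dist_eq_norm] at hdist
  rcases hxy with hx | hy
  · linarith [hsep x hx z hzE, norm_nonneg (z - y)]
  · linarith [hsep y hy z hzE, norm_sub_rev z y, norm_nonneg (x - z)]

lemma perK_le_of_le_norm_sub {K : Euc n → Euc n → ℝ} {κ q r : ℝ} (hK0 : ∀ x y, 0 ≤ K x y)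
    (hKle : ∀ x y, x ≠ y → K x y ≤ κ * ‖x - y‖ ^ (-q)) {E Ω : Set (Euc n)}
    (hsep : ∀ x ∈ Ω, ∀ z ∈ frontier E, r ≤ ‖x - z‖) :
    perK K E Ω ≤
      2 * volume Ω *
        (ENNReal.ofReal κ * ∫⁻ h in (ball (0 : Euc n) r)ᶜ, ENNReal.ofReal (‖h‖ ^ (-q))) := by
  set tail : Euc n → ℝ≥0∞ := (ball 0 r)ᶜ.indicator fun h => ENNReal.ofReal (κ * ‖h‖ ^ (-q))
  have htail : Measurable tail := (by fun_prop : Measurable fun h : Euc n =>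
    ENNReal.ofReal (κ * ‖h‖ ^ (-q))).indicator measurableSet_ball.compl
  have hpt : ∀ z ∈ sharpSet Ω,
      ENNReal.ofReal (|setInd E z.1 - setInd E z.2| / 2 * K z.1 z.2) ≤ tail (z.1 - z.2) := by
    rintro ⟨x, y⟩ hz
    by_cases hne : setInd E x = setInd E y
    · simp [hne]
    have hxy : x ∈ Ω ∨ y ∈ Ω := by rcases hz with (h | h) | h <;> simp [h.1, h.2]
    have hr : x - y ∈ (ball 0 r)ᶜ := by
      simpa using le_norm_sub_of_setInd_ne hsep hxy hne
    simp only [tail, indicator_of_mem hr]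
    refine ENNReal.ofReal_le_ofReal ?_
    have hd := abs_setInd_sub_le_one E x y
    calc |setInd E x - setInd E y| / 2 * K x y ≤ K x y := by
          nlinarith [hK0 x y, abs_nonneg (setInd E x - setInd E y)]
      _ ≤ κ * ‖x - y‖ ^ (-q) := hKle x y fun h => hne (h ▸ rfl)
  calc perK K E Ω ≤ ∫⁻ z in sharpSet Ω, tail (z.1 - z.2) :=
        setLIntegral_mono (htail.comp (by fun_prop)) hpt
    _ ≤ 2 * volume Ω * ∫⁻ h, tail h := lintegral_sharpSet_sub_le Ω tail
    _ = _ := by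
        simp_rw [tail, lintegral_indicator measurableSet_ball.compl,
          ENNReal.ofReal_mul' (Real.rpow_nonneg (norm_nonneg _) _)]
        rw [lintegral_const_mul' _ _ ENNReal.ofReal_ne_top]

end Perimeter

section Slab

variable {n : ℕ} {p : Euc n} (hp : ‖p‖ = 1)
include hp

lemma norm_inner_smul_eq_abs (x : Euc n) : ‖⟪x, p⟫ • p‖ = |⟪x, p⟫| := by
  rw [norm_smul, Real.norm_eq_abs, hp, mul_one]

lemma abs_inner_le_norm_of_norm_eq_one (x : Euc n) : |⟪x, p⟫| ≤ ‖x‖ := by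
  simpa [hp] using abs_real_inner_le_norm x p

lemma isBounded_slabA (L₁ L₂ R : ℝ) : Bornology.IsBounded (slabA p L₁ L₂ R) := by
  refine (isBounded_ball (x := 0) (r := R + L₂)).subset fun x ⟨_, hL₂, hR⟩ => ?_
  rw [mem_ball_zero_iff]
  calc ‖x‖ = ‖(x - ⟪x, p⟫ • p) + ⟪x, p⟫ • p‖ := by rw [sub_add_cancel]
    _ ≤ ‖x - ⟪x, p⟫ • p‖ + |⟪x, p⟫| := by
        rw [← norm_inner_smul_eq_abs hp]; exact norm_add_le _ _
    _ < R + L₂ := add_lt_add hR hL₂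

lemma sub_le_norm_sub_of_mem_slabA {L₁ L₂ R M : ℝ} {x z : Euc n} (hx : x ∈ slabA p L₁ L₂ R)
    (hz : |⟪z, p⟫| ≤ M) : L₁ - M ≤ ‖x - z‖ := by
  have : |⟪x, p⟫| - |⟪z, p⟫| ≤ ‖x - z‖ :=
    (abs_sub_abs_le_abs_sub _ _).trans
      (by simpa [inner_sub_left] using abs_inner_le_norm_of_norm_eq_one hp (x - z))
  linarith [hx.1]

lemma slabA_subset_biUnion_ball (L₁ L : ℝ) {R : ℝ} (hR : 0 < R) :
    slabA p L₁ L R ⊆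
      ⋃ j ∈ Finset.Icc (-⌈L / R⌉) ⌈L / R⌉, ball (((j : ℝ) * R) • p) (2 * R) := by
  rintro x ⟨-, hL, hxR⟩
  set t := ⟪x, p⟫
  set j := ⌊t / R⌋
  have htL : -(L / R) ≤ t / R ∧ t / R ≤ L / R := by
    rw [← neg_div, div_le_div_iff_of_pos_right hR, div_le_div_iff_of_pos_right hR]
    exact ⟨by linarith [neg_abs_le t], by linarith [le_abs_self t]⟩
  have hj : j ∈ Finset.Icc (-⌈L / R⌉) ⌈L / R⌉ := Finset.mem_Icc.2
    ⟨Int.floor_neg (a := L / R) ▸ Int.floor_mono htL.1,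
      (Int.floor_mono htL.2).trans (Int.floor_le_ceil _)⟩
  have htj : |t - j * R| < R := by
    have h₁ : (j : ℝ) * R ≤ t := (le_div_iff₀ hR).1 (Int.floor_le _)
    have h₂ : t < (j + 1) * R := (div_lt_iff₀ hR).1 (Int.lt_floor_add_one _)
    rw [abs_lt]; constructor <;> nlinarith
  refine mem_biUnion hj (mem_ball_iff_norm.2 ?_)
  calc ‖x - ((j : ℝ) * R) • p‖ = ‖(x - t • p) + (t - j * R) • p‖ := by
        rw [sub_smul]; congr 1; abel
    _ ≤ ‖x - t • p‖ + |t - j * R| := by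
        refine (norm_add_le _ _).trans_eq ?_
        rw [norm_smul, Real.norm_eq_abs, hp, mul_one]
    _ < 2 * R := by linarith

lemma volume_slabA_le (L₁ : ℝ) {L R : ℝ} (hR : 0 < R) (hRL : R ≤ L) :
    volume (slabA p L₁ L R) ≤
      ENNReal.ofReal (5 * (L / R) * (2 * R) ^ n) * volume (ball (0 : Euc n) 1) := by
  set N := ⌈L / R⌉
  have hN : ((Finset.Icc (-N) N).card : ℝ) ≤ 5 * (L / R) := by
    have h1 : 1 ≤ L / R := (one_le_div hR).2 hRL
    have hN0 : 0 ≤ N := Int.ceil_nonneg (by linarith)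
    have hcard : ((Finset.Icc (-N) N).card : ℤ) = 2 * N + 1 := by
      rw [Int.card_Icc]; omega
    have : ((Finset.Icc (-N) N).card : ℝ) = 2 * N + 1 := by exact_mod_cast hcard
    linarith [Int.ceil_lt_add_one (L / R)]
  calc volume (slabA p L₁ L R)
      ≤ ∑ j ∈ Finset.Icc (-N) N, volume (ball (((j : ℝ) * R) • p) (2 * R)) :=
        (measure_mono (slabA_subset_biUnion_ball hp L₁ L hR)).trans
          (measure_biUnion_finset_le _ _)
    _ = (Finset.Icc (-N) N).card *
          (ENNReal.ofReal ((2 * R) ^ n) * volume (ball (0 : Euc n) 1)) := by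
        simp_rw [Measure.addHaar_ball_of_pos _ _ (by positivity : 0 < 2 * R),
          finrank_euclideanSpace_fin, Finset.sum_const, nsmul_eq_mul]
    _ ≤ _ := by
        rw [← mul_assoc, ← ENNReal.ofReal_natCast, ← ENNReal.ofReal_mul (by positivity)]
        gcongr

end Slab

section Energy

variable {n : ℕ}

lemma IsAdmissibleKernel.le_rpow_neg {s₁ s₂ δ κ₁ κ₂ κ₃ : ℝ} {K : Euc n → Euc n → ℝ}
    (hK : IsAdmissibleKernel n s₁ s₂ δ κ₁ κ₂ κ₃ K) {x y : Euc n} (hxy : x ≠ y) :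
    K x y ≤ κ₂ * ‖x - y‖ ^ (-((n : ℝ) + 2 * s₂)) := by
  rw [Real.rpow_neg (norm_nonneg _), ← one_div]
  exact (hK.upper x y hxy).trans (mul_le_mul_of_nonneg_left (min_le_right _ _) hK.κ₂_pos.le)

lemma energyF_eq_perK (K : Euc n → Euc n → ℝ) {g : Euc n → ℝ} (hg : MemW g)
    {E Ω : Set (Euc n)} (hΩ : Bornology.IsBounded Ω) (hE : Disjoint Ω (frontier E)) :
    energyF K g E Ω = perK K E Ω := by
  rw [energyF, setIntegral_inter_unitCubes_eq_zero hg hΩ hE, EReal.coe_zero, add_zero]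

lemma rpow_mul_slab_bound_eq {R : ℝ} (hR : 0 < R) (α s : ℝ) :
    R ^ (1 - (n : ℝ)) * (5 * (R ^ (1 + α) / R) * (2 * R) ^ n * (R / 2) ^ (-(2 * s))) =
      5 * 2 ^ n * 2 ^ (2 * s) * R ^ (-(2 * s - 1 - α)) := by
  rw [Real.rpow_add hR, Real.rpow_one, mul_div_cancel_left₀ _ hR.ne', mul_pow,
    Real.div_rpow hR.le zero_le_two, Real.rpow_neg zero_le_two, div_inv_eq_mul,
    ← Real.rpow_natCast R n]
  have key : R ^ (1 - (n : ℝ)) * R ^ α * R ^ (n : ℝ) * R ^ (-(2 * s)) =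
      R ^ (-(2 * s - 1 - α)) := by
    rw [← Real.rpow_add hR, ← Real.rpow_add hR, ← Real.rpow_add hR]; ring_nf
  rw [← key]; ring

def slabPerimeterConst (n : ℕ) (κ s : ℝ) : ℝ≥0∞ :=
  2 * volume (ball (0 : Euc n) 1) * ENNReal.ofReal κ *
    ∫⁻ h in (ball (0 : Euc n) 1)ᶜ, ENNReal.ofReal (‖h‖ ^ (-((n : ℝ) + 2 * s)))

lemma slabPerimeterConst_ne_top (n : ℕ) (κ : ℝ) {s : ℝ} (hs : 0 < s) :
    slabPerimeterConst n κ s ≠ ⊤ := by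
  have := setLIntegral_compl_ball_rpow_neg_lt_top (volume : Measure (Euc n)) (q := n + 2 * s)
    (by rw [finrank_euclideanSpace_fin]; linarith)
  exact ENNReal.mul_ne_top (by finiteness) this.ne

variable {K : Euc n → Euc n → ℝ} {p : Euc n} (hp : ‖p‖ = 1)
  {E : Set (Euc n)} {M : ℝ} (hEb : frontier E ⊆ {x : Euc n | |⟪x, p⟫| ≤ M})
include hp hEb

lemma energyF_slabA_eq_perK {g : Euc n → ℝ} (hg : MemW g) {L₁ L₂ R : ℝ} (hM : M < L₁) :
    energyF K g E (slabA p L₁ L₂ R) = perK K E (slabA p L₁ L₂ R) := by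
  refine energyF_eq_perK K hg (isBounded_slabA hp _ _ _) (disjoint_left.2 fun x hx hxE => ?_)
  have := sub_le_norm_sub_of_mem_slabA hp hx (hEb hxE)
  rw [sub_self, norm_zero] at this
  linarith

variable {s₁ s₂ δ κ₁ κ₂ κ₃ : ℝ} (hK : IsAdmissibleKernel n s₁ s₂ δ κ₁ κ₂ κ₃ K)
include hK

lemma perK_slabA_le {R L : ℝ} (hR : 0 < R) (hMR : 2 * M ≤ R) (hRL : R ≤ L) :
    perK K E (slabA p R L R) ≤
      ENNReal.ofReal (5 * (L / R) * (2 * R) ^ n * (R / 2) ^ (-(2 * s₂))) *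
        slabPerimeterConst n κ₂ s₂ := by
  have hsep : ∀ x ∈ slabA p R L R, ∀ z ∈ frontier E, R / 2 ≤ ‖x - z‖ := fun x hx z hz => by
    linarith [sub_le_norm_sub_of_mem_slabA hp hx (hEb hz)]
  calc perK K E (slabA p R L R)
      ≤ 2 * volume (slabA p R L R) * (ENNReal.ofReal κ₂ *
          ∫⁻ h in (ball (0 : Euc n) (R / 2))ᶜ, ENNReal.ofReal (‖h‖ ^ (-((n : ℝ) + 2 * s₂)))) :=
        perK_le_of_le_norm_sub hK.nonneg (fun _ _ => hK.le_rpow_neg) hsep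
    _ ≤ 2 * (ENNReal.ofReal (5 * (L / R) * (2 * R) ^ n) * volume (ball (0 : Euc n) 1)) *
          (ENNReal.ofReal κ₂ * (ENNReal.ofReal ((R / 2) ^ (-(2 * s₂))) *
            ∫⁻ h in (ball (0 : Euc n) 1)ᶜ, ENNReal.ofReal (‖h‖ ^ (-((n : ℝ) + 2 * s₂))))) := by
        rw [setLIntegral_compl_ball_rpow_neg volume (by positivity), finrank_euclideanSpace_fin,
          sub_add_cancel_left]
        gcongr
        exact volume_slabA_le hp R hR hRL
    _ = _ := by
        rw [slabPerimeterConst, ENNReal.ofReal_mul (p := 5 * (L / R) * (2 * R) ^ n)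
          (by have := hR.trans_le hRL; positivity)]
        ring

lemma ofReal_rpow_mul_perK_slabA_le {α : ℝ} (hα : 0 ≤ α) {R : ℝ} (hR : 1 ≤ R)
    (hMR : 2 * M ≤ R) :
    ENNReal.ofReal (R ^ (1 - (n : ℝ))) * perK K E (slabA p R (R ^ (1 + α)) R) ≤
      ENNReal.ofReal (5 * 2 ^ n * 2 ^ (2 * s₂) * R ^ (-(2 * s₂ - 1 - α))) *
        slabPerimeterConst n κ₂ s₂ := by
  have hR0 : 0 < R := one_pos.trans_le hR
  have hRL : R ≤ R ^ (1 + α) := by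
    simpa using Real.rpow_le_rpow_of_exponent_le hR (by linarith : (1 : ℝ) ≤ 1 + α)
  refine (mul_le_mul_right (perK_slabA_le hp hEb hK hR0 hMR hRL) _).trans_eq ?_
  rw [← mul_assoc, ← ENNReal.ofReal_mul (by positivity), rpow_mul_slab_bound_eq hR0]

end Energy

theorem vanishing_energy_in_slabs_general
    (n : ℕ) (s₁ s₂ δ κ₁ κ₂ κ₃ : ℝ)
    (K : Euc n → Euc n → ℝ) (hK : IsAdmissibleKernel n s₁ s₂ δ κ₁ κ₂ κ₃ K)
    (g : Euc n → ℝ) (hg : GoodForcing g)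
    (p : Euc n) (hp : ‖p‖ = 1)
    (E : Set (Euc n))
    (M : ℝ) (hEb : frontier E ⊆ {x : Euc n | |⟪x, p⟫| ≤ M})
    (α : ℝ) (hα0 : 0 < α) (hα : α < 2 * s₂ - 1) :
    Tendsto
      (fun R : ℝ =>
        ((R ^ ((1 : ℝ) - (n : ℝ)) : ℝ) : EReal)
          * energyF K g E (slabA p R (R ^ (1 + α)) R))
      atTop (nhds (0 : EReal)) := by
  have hbound : Tendsto (fun R : ℝ =>
      ENNReal.ofReal (5 * 2 ^ n * 2 ^ (2 * s₂) * R ^ (-(2 * s₂ - 1 - α))) *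
        slabPerimeterConst n κ₂ s₂) atTop (𝓝 0) := by
    have h := (tendsto_rpow_neg_atTop (y := 2 * s₂ - 1 - α) (by linarith)).const_mul
      (5 * 2 ^ n * 2 ^ (2 * s₂) : ℝ)
    simpa using ENNReal.Tendsto.mul_const (ENNReal.tendsto_ofReal h)
      (.inr (slabPerimeterConst_ne_top n κ₂ (by linarith [hK.s₂_gt])))
  have hfar : ∀ᶠ R : ℝ in atTop, 1 ≤ R ∧ 2 * M ≤ R ∧ M < R :=
    (eventually_ge_atTop 1).and ((eventually_ge_atTop (2 * M)).and (eventually_gt_atTop M))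
  have hper := tendsto_of_tendsto_of_tendsto_of_le_of_le' tendsto_const_nhds hbound
    (.of_forall fun _ => zero_le)
    (hfar.mono fun R hR => ofReal_rpow_mul_perK_slabA_le hp hEb hK hα0.le hR.1 hR.2.1)
  have h := (continuous_coe_ennreal_ereal.tendsto 0).comp hper
  rw [EReal.coe_ennreal_zero] at h
  refine h.congr' ?_
  filter_upwards [hfar] with R hR
  rw [Function.comp_apply, energyF_slabA_eq_perK hp hEb hg.memW hR.2.2,
    EReal.coe_ennreal_mul, EReal.coe_ennreal_ofReal,
    max_eq_left (Real.rpow_nonneg (by linarith [hR.1]) _)]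

/-- Vanishing of the energy in far-away slabs. -/
theorem vanishing_energy_in_slabs
    (n : ℕ) (hn : 1 ≤ n) (s₁ s₂ δ κ₁ κ₂ κ₃ : ℝ)
    (K : Euc n → Euc n → ℝ) (hK : IsAdmissibleKernel n s₁ s₂ δ κ₁ κ₂ κ₃ K)
    (g : Euc n → ℝ) (hg : GoodForcing g)
    (p : Euc n) (hp : ‖p‖ = 1)
    (E : Set (Euc n)) (hE : MeasurableSet E)
    (M : ℝ) (hM : 0 < M) (hEb : frontier E ⊆ {x : Euc n | |⟪x, p⟫| ≤ M})
    (α : ℝ) (hα0 : 0 < α) (hα : α < 2 * s₂ - 1) :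
    Tendsto
      (fun R : ℝ =>
        ((R ^ ((1 : ℝ) - (n : ℝ)) : ℝ) : EReal)
          * energyF K g E (slabA p R (R ^ (1 + α)) R))
      atTop (nhds (0 : EReal)) :=
  vanishing_energy_in_slabs_general n s₁ s₂ δ κ₁ κ₂ κ₃ K hK g hg p hp E M hEb α hα0 hα
end
end

section
/- Let n ≥ 1, s ∈ (0,1/2) and δ > 0. Then there exists C > 0, depending only on δ, n and s, such that for every measurable function u : ℝⁿ → ℝ with ∫_Q u(x) dx = 0 one has ∬_{Q×Q} |u(x)−u(y)| / |x−y|^{n+2s} dx dy ≤ C ∬_{(Q×Q) ∩ {|x−y| < δ}} |u(x)−u(y)| / |x−y|^{n+2s} dx dy. -/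
open MeasureTheory ENNReal Filter Metric
open scoped RealInnerProductSpace Pointwise Topology NNReal

noncomputable section

/-!
Split the double integral at distance `δ`. On pairs at distance at least `δ` the weight is at
most `δ ^ (-p)`, so that part is controlled by the unweighted variation
`∬_{x, y ∈ S, |x - y| < R} |u x - u y|` at a scale `R` exceeding the diameter of `S`. Writing
`u x - u y = (u x - u m) + (u m - u y)` with `m` the midpoint of `x` and `y`, and substituting
`y ↦ m` (which scales Haar measure by `2 ^ d`, `d = dim E`, and keeps `m` in the convex set `S`),
the variation at scale `2 r` is at most `2 ^ (d + 1)` times the one at scale `r`. Iterating brings the scale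
down to `δ`, where `|u x - u y| ≤ δ ^ p * |u x - u y| / |x - y| ^ p`.
-/

open Module Set

namespace ShortRange

section Midpoint

variable {E : Type*} [NormedAddCommGroup E] [NormedSpace ℝ E] [MeasurableSpace E] [BorelSpace E]

theorem measurable_midpoint (x : E) : Measurable (midpoint ℝ x) := by
  rw [funext (midpoint_eq_smul_add ℝ x)]
  fun_prop

variable [FiniteDimensional ℝ E] (μ : Measure E) [μ.IsAddHaarMeasure]

theorem map_midpoint_addHaar (x : E) :
    μ.map (midpoint ℝ x) = (2 : ℝ≥0∞) ^ finrank ℝ E • μ := by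
  have hcomp : midpoint ℝ x = (fun y : E => (2⁻¹ : ℝ) • y) ∘ (x + ·) := by
    funext y
    simp [midpoint_eq_smul_add]
  rw [hcomp, ← Measure.map_map (measurable_const_smul _) (measurable_const_add x),
    map_add_left_eq_self, Measure.map_addHaar_smul μ (by norm_num)]
  simp

theorem setLIntegral_comp_midpoint_le {S : Set E} (hS : Convex ℝ S) (hSm : MeasurableSet S)
    {x : E} (hx : x ∈ S) (r : ℝ) {g : E → ℝ≥0∞} (hg : Measurable g) :
    ∫⁻ y in S ∩ ball x (2 * r), g (midpoint ℝ x y) ∂μ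
      ≤ 2 ^ finrank ℝ E * ∫⁻ z in S ∩ ball x r, g z ∂μ := by
  have hmaps : S ∩ ball x (2 * r) ⊆ midpoint ℝ x ⁻¹' (S ∩ ball x r) := by
    rintro y ⟨hyS, hyr⟩
    refine ⟨hS.midpoint_mem hx hyS, ?_⟩
    rw [mem_ball, dist_comm] at hyr
    rw [mem_ball, dist_comm, dist_left_midpoint]
    norm_num
    linarith
  calc ∫⁻ y in S ∩ ball x (2 * r), g (midpoint ℝ x y) ∂μ
      ≤ ∫⁻ y in midpoint ℝ x ⁻¹' (S ∩ ball x r), g (midpoint ℝ x y) ∂μ :=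
        lintegral_mono_set hmaps
    _ = ∫⁻ z in S ∩ ball x r, g z ∂(μ.map (midpoint ℝ x)) :=
        (setLIntegral_map (hSm.inter measurableSet_ball) hg (measurable_midpoint x)).symm
    _ = 2 ^ finrank ℝ E * ∫⁻ z in S ∩ ball x r, g z ∂μ := by
        rw [map_midpoint_addHaar, Measure.restrict_smul, lintegral_smul_measure, smul_eq_mul]

end Midpoint

section Swap

variable {E : Type*} [PseudoMetricSpace E] [MeasurableSpace E] [OpensMeasurableSpace E]
  (μ : Measure E)

theorem setLIntegral_inter_ball (S : Set E) (x : E) (r : ℝ) (f : E → ℝ≥0∞) :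
    ∫⁻ y in S ∩ ball x r, f y ∂μ = ∫⁻ y in S, (ball x r).indicator f y ∂μ := by
  rw [lintegral_indicator measurableSet_ball, Measure.restrict_restrict measurableSet_ball,
    inter_comm]

variable [SecondCountableTopology E]

theorem measurable_indicator_ball {f : E → E → ℝ≥0∞} (hf : Measurable (Function.uncurry f))
    (r : ℝ) : Measurable (Function.uncurry fun x y => (ball x r).indicator (f x) y) := by
  have hset : MeasurableSet {q : E × E | dist q.2 q.1 < r} :=
    measurableSet_lt (measurable_snd.dist measurable_fst) measurable_const
  convert hf.indicator hset using 1
  ext ⟨x, y⟩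
  by_cases h : dist y x < r
  · simp [indicator_of_mem, h, mem_ball]
  · simp [indicator_of_notMem, h, mem_ball]

variable [SFinite μ]

theorem measurable_setLIntegral_inter_ball (S : Set E) {f : E → E → ℝ≥0∞}
    (hf : Measurable (Function.uncurry f)) (r : ℝ) :
    Measurable fun x => ∫⁻ y in S ∩ ball x r, f x y ∂μ := by
  simp_rw [setLIntegral_inter_ball]
  exact (measurable_indicator_ball hf r).lintegral_prod_right'

theorem lintegral_setLIntegral_inter_ball_swap (S : Set E) {f : E → E → ℝ≥0∞}
    (hf : Measurable (Function.uncurry f)) (r : ℝ) :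
    ∫⁻ x in S, ∫⁻ y in S ∩ ball x r, f x y ∂μ ∂μ
      = ∫⁻ x in S, ∫⁻ y in S ∩ ball x r, f y x ∂μ ∂μ := by
  simp_rw [setLIntegral_inter_ball]
  rw [lintegral_lintegral_swap (measurable_indicator_ball hf r).aemeasurable]
  refine lintegral_congr fun x => lintegral_congr fun y => ?_
  by_cases h : x ∈ ball y r
  · rw [indicator_of_mem h, indicator_of_mem (mem_ball_comm.1 h)]
  · rw [indicator_of_notMem h, indicator_of_notMem (mt mem_ball_comm.2 h)]

end Swap

section Variation

variable {E F : Type*} [NormedAddCommGroup E] [NormedSpace ℝ E] [FiniteDimensional ℝ E]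
  [MeasurableSpace E] [BorelSpace E] (μ : Measure E) [μ.IsAddHaarMeasure]
  [PseudoEMetricSpace F] [MeasurableSpace F] [OpensMeasurableSpace F] [SecondCountableTopology F]
  {S : Set E} {u : E → F}

def shortRangeVariation (S : Set E) (u : E → F) (r : ℝ) : ℝ≥0∞ :=
  ∫⁻ x in S, ∫⁻ y in S ∩ ball x r, edist (u x) (u y) ∂μ ∂μ

theorem shortRangeVariation_two_mul_le (hS : Convex ℝ S) (hSm : MeasurableSet S)
    (hu : Measurable u) (r : ℝ) :
    shortRangeVariation μ S u (2 * r) ≤ 2 ^ (finrank ℝ E + 1) * shortRangeVariation μ S u r := by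
  set m : E → E → E := midpoint ℝ
  have hm : Measurable (Function.uncurry m) := by
    simp_rw [m, Function.uncurry_def, midpoint_eq_smul_add]
    fun_prop
  have hm₁ : Measurable (Function.uncurry fun x y => edist (u x) (u (m x y))) :=
    (hu.comp measurable_fst).edist (hu.comp hm)
  have hm₂ : Measurable (Function.uncurry fun x y => edist (u (m x y)) (u y)) :=
    (hu.comp hm).edist (hu.comp measurable_snd)
  have hswap : ∫⁻ x in S, ∫⁻ y in S ∩ ball x (2 * r), edist (u (m x y)) (u y) ∂μ ∂μ
      = ∫⁻ x in S, ∫⁻ y in S ∩ ball x (2 * r), edist (u x) (u (m x y)) ∂μ ∂μ := by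
    rw [lintegral_setLIntegral_inter_ball_swap μ S hm₂]
    simp only [m, midpoint_comm, edist_comm]
  calc shortRangeVariation μ S u (2 * r)
      ≤ ∫⁻ x in S, ∫⁻ y in S ∩ ball x (2 * r),
          (edist (u x) (u (m x y)) + edist (u (m x y)) (u y)) ∂μ ∂μ :=
        lintegral_mono fun x => lintegral_mono fun y => edist_triangle _ _ _
    _ = ∫⁻ x in S, ∫⁻ y in S ∩ ball x (2 * r), edist (u x) (u (m x y)) ∂μ ∂μ
          + ∫⁻ x in S, ∫⁻ y in S ∩ ball x (2 * r), edist (u (m x y)) (u y) ∂μ ∂μ := by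
        rw [← lintegral_add_left (measurable_setLIntegral_inter_ball μ S hm₁ _)]
        exact lintegral_congr fun x => lintegral_add_left (hm₁.comp measurable_prodMk_left) _
    _ = 2 * ∫⁻ x in S, ∫⁻ y in S ∩ ball x (2 * r), edist (u x) (u (m x y)) ∂μ ∂μ := by
        rw [hswap]
        exact (two_mul _).symm
    _ ≤ 2 * ∫⁻ x in S, 2 ^ finrank ℝ E * ∫⁻ z in S ∩ ball x r, edist (u x) (u z) ∂μ ∂μ := by
        gcongr 2 * ?_
        exact setLIntegral_mono' hSm fun x hx => setLIntegral_comp_midpoint_le μ hS hSm hx r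
          (g := fun z => edist (u x) (u z)) (measurable_const.edist hu)
    _ = 2 ^ (finrank ℝ E + 1) * shortRangeVariation μ S u r := by
        rw [lintegral_const_mul' _ _ (by simp), pow_succ, shortRangeVariation]
        ring

theorem shortRangeVariation_two_pow_mul_le (hS : Convex ℝ S) (hSm : MeasurableSet S)
    (hu : Measurable u) (r : ℝ) (k : ℕ) :
    shortRangeVariation μ S u (2 ^ k * r)
      ≤ 2 ^ ((finrank ℝ E + 1) * k) * shortRangeVariation μ S u r := by
  induction k with
  | zero => simp
  | succ k ih =>
    calc shortRangeVariation μ S u (2 ^ (k + 1) * r)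
        = shortRangeVariation μ S u (2 * (2 ^ k * r)) := by ring_nf
      _ ≤ 2 ^ (finrank ℝ E + 1) * (2 ^ ((finrank ℝ E + 1) * k) * shortRangeVariation μ S u r) :=
        (shortRangeVariation_two_mul_le μ hS hSm hu _).trans (by gcongr)
      _ = 2 ^ ((finrank ℝ E + 1) * (k + 1)) * shortRangeVariation μ S u r := by
        rw [← mul_assoc, ← pow_add]
        ring_nf

end Variation

section Weighted

variable {E : Type*} [NormedAddCommGroup E] [MeasurableSpace E] (μ : Measure E)
  {S : Set E} {u : E → ℝ} {p δ : ℝ}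

theorem lintegral_div_rpow_le_inter_ball_add [OpensMeasurableSpace E]
    [SecondCountableTopology E] [SFinite μ] (hu : Measurable u) (hp : 0 ≤ p) (hδ : 0 < δ) :
    ∫⁻ x in S, ∫⁻ y in S, ENNReal.ofReal (|u x - u y| / ‖x - y‖ ^ p) ∂μ ∂μ
      ≤ ∫⁻ x in S, ∫⁻ y in S ∩ ball x δ, ENNReal.ofReal (|u x - u y| / ‖x - y‖ ^ p) ∂μ ∂μ
        + ENNReal.ofReal (δ ^ p)⁻¹ * ∫⁻ x in S, ∫⁻ y in S, edist (u x) (u y) ∂μ ∂μ := by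
  have hfar (x y : E) (hy : y ∉ ball x δ) :
      ENNReal.ofReal (|u x - u y| / ‖x - y‖ ^ p)
        ≤ ENNReal.ofReal (δ ^ p)⁻¹ * edist (u x) (u y) := by
    rw [mem_ball', not_lt, dist_eq_norm] at hy
    rw [edist_dist, Real.dist_eq, ← ENNReal.ofReal_mul (by positivity), div_eq_inv_mul]
    gcongr
  have hfar_int (x : E) :
      ∫⁻ y in S \ ball x δ, ENNReal.ofReal (|u x - u y| / ‖x - y‖ ^ p) ∂μ
        ≤ ENNReal.ofReal (δ ^ p)⁻¹ * ∫⁻ y in S, edist (u x) (u y) ∂μ := by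
    rw [← lintegral_const_mul' _ _ ENNReal.ofReal_ne_top]
    exact (setLIntegral_mono (measurable_const.mul (measurable_const.edist hu))
      fun y hy => hfar x y hy.2).trans (lintegral_mono_set sdiff_subset)
  have hmeas : Measurable fun x => ∫⁻ y in S, edist (u x) (u y) ∂μ :=
    ((hu.comp measurable_fst).edist (hu.comp measurable_snd)).lintegral_prod_right'
  calc ∫⁻ x in S, ∫⁻ y in S, ENNReal.ofReal (|u x - u y| / ‖x - y‖ ^ p) ∂μ ∂μ
      = ∫⁻ x in S, (∫⁻ y in S ∩ ball x δ, ENNReal.ofReal (|u x - u y| / ‖x - y‖ ^ p) ∂μ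
          + ∫⁻ y in S \ ball x δ, ENNReal.ofReal (|u x - u y| / ‖x - y‖ ^ p) ∂μ) ∂μ := by
        simp_rw [lintegral_inter_add_sdiff _ _ measurableSet_ball]
    _ ≤ ∫⁻ x in S, (∫⁻ y in S ∩ ball x δ, ENNReal.ofReal (|u x - u y| / ‖x - y‖ ^ p) ∂μ
          + ENNReal.ofReal (δ ^ p)⁻¹ * ∫⁻ y in S, edist (u x) (u y) ∂μ) ∂μ := by
        gcongr with x
        exact hfar_int x
    _ = _ := by
        rw [lintegral_add_right _ (hmeas.const_mul _), lintegral_const_mul _ hmeas]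

theorem shortRangeVariation_le_rpow_mul [OpensMeasurableSpace E] (hSm : MeasurableSet S)
    (hp : 0 ≤ p) :
    shortRangeVariation μ S u δ
      ≤ ENNReal.ofReal (δ ^ p)
        * ∫⁻ x in S, ∫⁻ y in S ∩ ball x δ, ENNReal.ofReal (|u x - u y| / ‖x - y‖ ^ p) ∂μ ∂μ := by
  have hnear (x y : E) (hy : y ∈ ball x δ) :
      edist (u x) (u y)
        ≤ ENNReal.ofReal (δ ^ p) * ENNReal.ofReal (|u x - u y| / ‖x - y‖ ^ p) := by
    rw [mem_ball', dist_eq_norm] at hy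
    have hδ : 0 ≤ δ := (norm_nonneg _).trans hy.le
    rw [edist_dist, Real.dist_eq, ← ENNReal.ofReal_mul (by positivity)]
    refine ENNReal.ofReal_le_ofReal ?_
    rcases eq_or_ne x y with rfl | hxy
    · simp
    have hpos : 0 < ‖x - y‖ ^ p := Real.rpow_pos_of_pos (norm_pos_iff.2 (sub_ne_zero.2 hxy)) p
    calc |u x - u y| = ‖x - y‖ ^ p * (|u x - u y| / ‖x - y‖ ^ p) := by field_simp
      _ ≤ δ ^ p * (|u x - u y| / ‖x - y‖ ^ p) := by gcongr
  rw [shortRangeVariation, ← lintegral_const_mul' _ _ ENNReal.ofReal_ne_top]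
  refine lintegral_mono fun x => ?_
  rw [← lintegral_const_mul' _ _ ENNReal.ofReal_ne_top]
  exact setLIntegral_mono' (hSm.inter measurableSet_ball) fun y hy => hnear x y hy.2

theorem shortRangeVariation_eq_of_forall_dist_lt {F : Type*} [PseudoEMetricSpace F] {u : E → F}
    {R : ℝ} (hSm : MeasurableSet S) (hR : ∀ x ∈ S, ∀ y ∈ S, dist x y < R) :
    shortRangeVariation μ S u R = ∫⁻ x in S, ∫⁻ y in S, edist (u x) (u y) ∂μ ∂μ :=
  setLIntegral_congr_fun hSm fun x hx => by
    simp only [inter_eq_left.2 fun y hy => mem_ball'.2 (hR x hx y hy)]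

end Weighted

theorem exists_lintegral_le_mul_lintegral_inter_ball {E : Type*} [NormedAddCommGroup E]
    [NormedSpace ℝ E] [FiniteDimensional ℝ E] [MeasurableSpace E] [BorelSpace E]
    (μ : Measure E) [μ.IsAddHaarMeasure] {S : Set E} (hS : Convex ℝ S) (hSm : MeasurableSet S)
    (hSb : Bornology.IsBounded S) {p δ : ℝ} (hp : 0 ≤ p) (hδ : 0 < δ) :
    ∃ C : ℝ, 0 < C ∧ ∀ u : E → ℝ, Measurable u →
      ∫⁻ x in S, ∫⁻ y in S, ENNReal.ofReal (|u x - u y| / ‖x - y‖ ^ p) ∂μ ∂μ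
        ≤ ENNReal.ofReal C *
          ∫⁻ x in S, ∫⁻ y in S ∩ ball x δ, ENNReal.ofReal (|u x - u y| / ‖x - y‖ ^ p) ∂μ ∂μ := by
  obtain ⟨R, hR⟩ := Metric.isBounded_iff.1 hSb
  obtain ⟨k, hk⟩ := pow_unbounded_of_one_lt (R / δ) one_lt_two
  have hdiam : ∀ x ∈ S, ∀ y ∈ S, dist x y < 2 ^ k * δ := fun x hx y hy =>
    (hR hx hy).trans_lt ((div_lt_iff₀ hδ).1 hk)
  set N : ℕ := (finrank ℝ E + 1) * k
  refine ⟨1 + 2 ^ N, by positivity, fun u hu => ?_⟩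
  set B := ∫⁻ x in S, ∫⁻ y in S ∩ ball x δ, ENNReal.ofReal (|u x - u y| / ‖x - y‖ ^ p) ∂μ ∂μ
  have hδp : ENNReal.ofReal (δ ^ p)⁻¹ * ENNReal.ofReal (δ ^ p) = 1 := by
    rw [← ENNReal.ofReal_mul (by positivity), inv_mul_cancel₀ (by positivity), ENNReal.ofReal_one]
  calc ∫⁻ x in S, ∫⁻ y in S, ENNReal.ofReal (|u x - u y| / ‖x - y‖ ^ p) ∂μ ∂μ
      ≤ B + ENNReal.ofReal (δ ^ p)⁻¹ * shortRangeVariation μ S u (2 ^ k * δ) := by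
        rw [shortRangeVariation_eq_of_forall_dist_lt μ hSm hdiam]
        exact lintegral_div_rpow_le_inter_ball_add μ hu hp hδ
    _ ≤ B + ENNReal.ofReal (δ ^ p)⁻¹ * (2 ^ N * (ENNReal.ofReal (δ ^ p) * B)) := by
        gcongr
        exact (shortRangeVariation_two_pow_mul_le μ hS hSm hu δ k).trans
          (by gcongr; exact shortRangeVariation_le_rpow_mul μ hSm hp)
    _ = B + 2 ^ N * B := by
        rw [mul_left_comm, ← mul_assoc (ENNReal.ofReal _), hδp, one_mul]
    _ = ENNReal.ofReal (1 + 2 ^ N) * B := by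
        rw [ENNReal.ofReal_add zero_le_one (by positivity), ENNReal.ofReal_one,
          ENNReal.ofReal_pow zero_le_two, ENNReal.ofReal_ofNat]
        ring

end ShortRange

theorem Qcube_eq_preimage_pi (n : ℕ) :
    Qcube n = PiLp.continuousLinearEquiv 2 ℝ (fun _ : Fin n => ℝ) ⁻¹'
      univ.pi fun _ => Ioo 0 1 := by
  ext x
  simp [Qcube]

theorem convex_Qcube (n : ℕ) : Convex ℝ (Qcube n) := by
  rw [Qcube_eq_preimage_pi]
  exact (convex_pi fun _ _ => convex_Ioo 0 1).linear_preimage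
    (PiLp.continuousLinearEquiv 2 ℝ _).toLinearMap

theorem isOpen_Qcube (n : ℕ) : IsOpen (Qcube n) := by
  rw [Qcube_eq_preimage_pi]
  exact (isOpen_set_pi finite_univ fun _ _ => isOpen_Ioo).preimage
    (ContinuousLinearEquiv.continuous _)

theorem isBounded_Qcube (n : ℕ) : Bornology.IsBounded (Qcube n) := by
  rw [Qcube_eq_preimage_pi, ← ContinuousLinearEquiv.image_symm_eq_preimage]
  exact (ContinuousLinearEquiv.lipschitz _).isBounded_image
    (Bornology.IsBounded.pi fun _ => Metric.isBounded_Ioo 0 1)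

theorem short_range_interaction_norm_equivalence_general
    (n : ℕ) (s δ : ℝ) (hs0 : 0 < s) (hδ : 0 < δ) :
    ∃ C : ℝ, 0 < C ∧
      ∀ u : Euc n → ℝ, Measurable u → IntegrableOn u (Qcube n) →
        (∫ x in Qcube n, u x) = 0 →
        (∫⁻ x in Qcube n, ∫⁻ y in Qcube n,
            ENNReal.ofReal (|u x - u y| / ‖x - y‖ ^ ((n : ℝ) + 2 * s)))
          ≤ ENNReal.ofReal C *
            ∫⁻ x in Qcube n, ∫⁻ y in Qcube n ∩ Metric.ball x δ,
              ENNReal.ofReal (|u x - u y| / ‖x - y‖ ^ ((n : ℝ) + 2 * s)) := by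
  obtain ⟨C, hC, hbound⟩ := ShortRange.exists_lintegral_le_mul_lintegral_inter_ball volume
    (p := n + 2 * s) (convex_Qcube n) (isOpen_Qcube n).measurableSet (isBounded_Qcube n)
    (by positivity) hδ
  exact ⟨C, hC, fun u hu _ _ => hbound u hu⟩

/-- Norms subject to short-range interactions. -/
theorem short_range_interaction_norm_equivalence
    (n : ℕ) (hn : 1 ≤ n) (s δ : ℝ) (hs0 : 0 < s) (hs : s < 1 / 2) (hδ : 0 < δ) :
    ∃ C : ℝ, 0 < C ∧
      ∀ u : Euc n → ℝ, Measurable u → IntegrableOn u (Qcube n) →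
        (∫ x in Qcube n, u x) = 0 →
        (∫⁻ x in Qcube n, ∫⁻ y in Qcube n,
            ENNReal.ofReal (|u x - u y| / ‖x - y‖ ^ ((n : ℝ) + 2 * s)))
          ≤ ENNReal.ofReal C *
            ∫⁻ x in Qcube n, ∫⁻ y in Qcube n ∩ Metric.ball x δ,
              ENNReal.ofReal (|u x - u y| / ‖x - y‖ ^ ((n : ℝ) + 2 * s)) :=
  short_range_interaction_norm_equivalence_general n s δ hs0 hδ
end
end

section
/- Let K be an admissible kernel. Then there exists a constant C > 0, depending only on n, s₁, κ₁ and δ, such that for the ball B_r centered at the origin: P_K(B_r) ≥ C r^{n−2s₁} if 0 < r ≤ δ/4, and P_K(B_r) ≥ C r^{n−1} if r > δ/4. -/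
open MeasureTheory ENNReal Filter Metric
open scoped RealInnerProductSpace Pointwise Topology NNReal

noncomputable section

/-! For `r ≤ δ / 4`, the pairs `(x, y) ∈ B_{r/2} × B_{r/2}(2r e)` (`e` a unit vector) are all at
distance `< 3r`, where `K ≳ κ₁ r^{-n-2s₁}`; both balls have volume `~ rⁿ`, giving `r^{n-2s₁}`.
For `r > δ / 4`, take instead `x` in the shell `r - δ/4 < |x| < r`, of volume `≳ δ r^{n-1}`, and
`y` in the ball of radius `δ/8` around `x` pushed radially outward by `δ/2`: these pairs are at
distance `< δ`, where `K ≥ κ₁ δ^{-n-2s₁}`. -/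

theorem mul_pow_pred_le_pow_sub_pow {r h : ℝ} (hh : 0 ≤ h) (hhr : h ≤ r) {n : ℕ} (hn : n ≠ 0) :
    h * r ^ (n - 1) ≤ r ^ n - (r - h) ^ n := by
  obtain ⟨m, rfl⟩ := Nat.exists_eq_succ_of_ne_zero hn
  have : (r - h) ^ m ≤ r ^ m := pow_le_pow_left₀ (by linarith) (by linarith) m
  simp only [Nat.succ_sub_one, pow_succ]
  nlinarith

section Measure

variable {α : Type*} [MeasurableSpace α] {μ : Measure α}

theorem mul_mul_le_setLIntegral_setLIntegral {f : α → α → ℝ≥0∞} {E F A : Set α}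
    {B : α → Set α} {a b c : ℝ≥0∞} (hA : MeasurableSet A) (hB : ∀ x, MeasurableSet (B x))
    (hAE : A ⊆ E) (hBF : ∀ x ∈ A, B x ⊆ F) (hf : ∀ x ∈ A, ∀ y ∈ B x, c ≤ f x y)
    (hb : ∀ x ∈ A, b ≤ μ (B x)) (ha : a ≤ μ A) :
    c * b * a ≤ ∫⁻ x in E, ∫⁻ y in F, f x y ∂μ ∂μ := by
  have hinner : ∀ x ∈ A, c * b ≤ ∫⁻ y in F, f x y ∂μ := fun x hx =>
    calc c * b ≤ ∫⁻ _ in B x, c ∂μ := by rw [setLIntegral_const]; gcongr; exact hb x hx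
      _ ≤ ∫⁻ y in B x, f x y ∂μ := setLIntegral_mono' (hB x) (hf x hx)
      _ ≤ ∫⁻ y in F, f x y ∂μ := lintegral_mono_set (hBF x hx)
  calc c * b * a ≤ ∫⁻ _ in A, c * b ∂μ := by rw [setLIntegral_const]; gcongr
    _ ≤ ∫⁻ x in A, ∫⁻ y in F, f x y ∂μ ∂μ := setLIntegral_mono' hA hinner
    _ ≤ ∫⁻ x in E, ∫⁻ y in F, f x y ∂μ ∂μ := lintegral_mono_set hAE

end Measure

theorem le_addHaar_ball_sdiff_closedBall {E : Type*} [NormedAddCommGroup E] [NormedSpace ℝ E]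
    [MeasurableSpace E] [BorelSpace E] [FiniteDimensional ℝ E] [Nontrivial E] (μ : Measure E)
    [μ.IsAddHaarMeasure] (x : E) {r h : ℝ} (hh : 0 < h) (hhr : h ≤ r) :
    ENNReal.ofReal (h * r ^ (Module.finrank ℝ E - 1)) * μ (ball 0 1)
      ≤ μ (ball x r \ closedBall x (r - h)) := by
  rw [measure_sdiff (closedBall_subset_ball (by linarith))
      measurableSet_closedBall.nullMeasurableSet measure_closedBall_lt_top.ne,
    Measure.addHaar_ball μ x (by linarith), Measure.addHaar_closedBall μ x (by linarith)]
  refine ENNReal.le_sub_of_add_le_right (by finiteness) ?_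
  rw [← add_mul, ← ENNReal.ofReal_add (mul_nonneg hh.le (pow_nonneg (by linarith) _))
    (pow_nonneg (by linarith) _)]
  gcongr
  linarith [mul_pow_pred_le_pow_sub_pow hh.le hhr (Module.finrank_pos (R := ℝ) (M := E)).ne']

theorem volume_ball_euc {n : ℕ} (x : Euc n) {t : ℝ} (ht : 0 < t) :
    volume (ball x t) = ENNReal.ofReal (t ^ n * (volume (ball (0 : Euc n) 1)).toReal) := by
  rw [Measure.addHaar_ball_of_pos _ _ ht, finrank_euclideanSpace_fin,
    ENNReal.ofReal_mul (by positivity), ENNReal.ofReal_toReal measure_ball_lt_top.ne]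

section RadialShift

variable {E : Type*} [NormedAddCommGroup E] [NormedSpace ℝ E] {x y : E} {s ρ : ℝ}

theorem norm_one_add_div_norm_smul (hx : x ≠ 0) (hs : 0 ≤ s) :
    ‖(1 + s / ‖x‖) • x‖ = ‖x‖ + s := by
  have := norm_pos_iff.mpr hx
  rw [norm_smul, Real.norm_of_nonneg (by positivity)]
  field_simp

theorem norm_one_add_div_norm_smul_sub_self (hx : x ≠ 0) (hs : 0 ≤ s) :
    ‖(1 + s / ‖x‖) • x - x‖ = s := by
  have := norm_pos_iff.mpr hx
  rw [add_smul, one_smul, add_sub_cancel_left, norm_smul, Real.norm_of_nonneg (by positivity)]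
  field_simp

theorem lt_norm_of_mem_ball_one_add_div_norm_smul (hx : x ≠ 0) (hs : 0 ≤ s)
    (hy : y ∈ ball ((1 + s / ‖x‖) • x) ρ) : ‖x‖ + s - ρ < ‖y‖ := by
  rw [mem_ball_iff_norm] at hy
  linarith [norm_one_add_div_norm_smul hx hs, norm_sub_norm_le ((1 + s / ‖x‖) • x) y,
    norm_sub_rev y ((1 + s / ‖x‖) • x)]

theorem norm_sub_lt_of_mem_ball_one_add_div_norm_smul (hx : x ≠ 0) (hs : 0 ≤ s)
    (hy : y ∈ ball ((1 + s / ‖x‖) • x) ρ) : ‖x - y‖ < s + ρ := by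
  rw [mem_ball_iff_norm] at hy
  linarith [norm_one_add_div_norm_smul_sub_self hx hs, norm_sub_rev x ((1 + s / ‖x‖) • x),
    norm_sub_le_norm_sub_add_norm_sub x ((1 + s / ‖x‖) • x) y, norm_sub_rev y ((1 + s / ‖x‖) • x)]

end RadialShift

def kernelPerimeter {n : ℕ} (K : Euc n → Euc n → ℝ) (E : Set (Euc n)) : ℝ≥0∞ :=
  ∫⁻ x in E, ∫⁻ y in Eᶜ, ENNReal.ofReal (K x y)

namespace IsAdmissibleKernel

variable {n : ℕ} {s₁ s₂ δ κ₁ κ₂ κ₃ : ℝ} {K : Euc n → Euc n → ℝ}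

theorem div_rpow_le (hK : IsAdmissibleKernel n s₁ s₂ δ κ₁ κ₂ κ₃ K) {x y : Euc n} {d : ℝ}
    (hxy : x ≠ y) (hd : ‖x - y‖ ≤ d) (hδ : ‖x - y‖ < δ) :
    κ₁ / d ^ ((n : ℝ) + 2 * s₁) ≤ K x y := by
  have hpos : 0 < ‖x - y‖ := norm_sub_pos_iff.mpr hxy
  refine le_trans ?_ (hK.lower x y hpos hδ)
  have := hK.s₁_pos
  gcongr
  exact hK.κ₁_pos.le

theorem exists_le_kernelPerimeter_ball_of_le (hK : IsAdmissibleKernel n s₁ s₂ δ κ₁ κ₂ κ₃ K)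
    (hn : n ≠ 0) : ∃ C > 0, ∀ r, 0 < r → r ≤ δ / 4 →
      ENNReal.ofReal (C * r ^ ((n : ℝ) - 2 * s₁)) ≤ kernelPerimeter K (ball 0 r) := by
  have : Nonempty (Fin n) := ⟨⟨0, Nat.pos_of_ne_zero hn⟩⟩
  obtain ⟨e, he⟩ := exists_norm_eq (Euc n) zero_le_one
  set ω := (volume (ball (0 : Euc n) 1)).toReal with hω_def
  have hω : 0 < ω := ENNReal.toReal_pos (measure_ball_pos _ _ one_pos).ne' measure_ball_lt_top.ne
  have := hK.κ₁_pos
  have := hK.s₁_pos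
  refine ⟨κ₁ / 3 ^ ((n : ℝ) + 2 * s₁) * (ω / 2 ^ n) ^ 2, by positivity, fun r hr hrδ => ?_⟩
  have hpair : ∀ x ∈ ball (0 : Euc n) (r / 2), ∀ y ∈ ball ((2 * r) • e) (r / 2),
      ‖x - y‖ < 3 * r ∧ r < ‖y‖ := by
    intro x hx y hy
    rw [mem_ball_zero_iff] at hx
    rw [mem_ball_iff_norm] at hy
    have h2e : ‖(2 * r) • e‖ = 2 * r := by
      rw [norm_smul, he, mul_one, Real.norm_of_nonneg (by positivity)]
    have hxy : x - y = x - (2 * r) • e - (y - (2 * r) • e) := by abel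
    constructor
    · rw [hxy]
      linarith [norm_sub_le (x - (2 * r) • e) (y - (2 * r) • e), norm_sub_le x ((2 * r) • e)]
    · linarith [norm_sub_norm_le ((2 * r) • e) y, norm_sub_rev y ((2 * r) • e)]
  have hbound := mul_mul_le_setLIntegral_setLIntegral (μ := volume)
    (f := fun x y => ENNReal.ofReal (K x y)) (E := ball (0 : Euc n) r) (F := (ball 0 r)ᶜ)
    measurableSet_ball (fun _ => measurableSet_ball) (ball_subset_ball (by linarith))
    (fun x hx y hy => by
      obtain ⟨-, hy⟩ := hpair x hx y hy
      simpa using hy.le)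
    (fun x hx y hy => by
      obtain ⟨hxy, hy⟩ := hpair x hx y hy
      refine ENNReal.ofReal_le_ofReal (hK.div_rpow_le (d := 3 * r) ?_ hxy.le (by linarith))
      rw [mem_ball_zero_iff] at hx
      exact ne_of_apply_ne norm (by linarith))
    (fun _ _ => (volume_ball_euc _ (half_pos hr)).ge) (volume_ball_euc _ (half_pos hr)).ge
  rw [← hω_def] at hbound
  refine le_trans (le_of_eq ?_) hbound
  rw [← ENNReal.ofReal_mul (by positivity), ← ENNReal.ofReal_mul (by positivity)]
  congr 1
  rw [Real.mul_rpow (by norm_num) hr.le, Real.rpow_add hr, Real.rpow_sub hr, Real.rpow_natCast,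
    div_pow r]
  field_simp

theorem exists_le_kernelPerimeter_ball_of_gt (hK : IsAdmissibleKernel n s₁ s₂ δ κ₁ κ₂ κ₃ K)
    (hn : n ≠ 0) : ∃ C > 0, ∀ r, δ / 4 < r →
      ENNReal.ofReal (C * r ^ ((n : ℝ) - 1)) ≤ kernelPerimeter K (ball 0 r) := by
  have : Nonempty (Fin n) := ⟨⟨0, Nat.pos_of_ne_zero hn⟩⟩
  set ω := (volume (ball (0 : Euc n) 1)).toReal with hω_def
  have hω : 0 < ω := ENNReal.toReal_pos (measure_ball_pos _ _ one_pos).ne' measure_ball_lt_top.ne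
  have := hK.κ₁_pos
  have := hK.δ_pos
  refine ⟨κ₁ / δ ^ ((n : ℝ) + 2 * s₁) * ((δ / 8) ^ n * ω) * (δ / 4 * ω), by positivity,
    fun r hr => ?_⟩
  have hr0 : 0 < r := by linarith
  set A := ball (0 : Euc n) r \ closedBall 0 (r - δ / 4)
  have hpair : ∀ x ∈ A, ∀ y ∈ ball ((1 + (δ / 2) / ‖x‖) • x) (δ / 8), ‖x - y‖ < δ ∧ r < ‖y‖ := by
    rintro x ⟨-, hxδ⟩ y hy
    rw [mem_closedBall_zero_iff, not_le] at hxδ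
    have hx : x ≠ 0 := norm_pos_iff.mp (by linarith)
    have := norm_sub_lt_of_mem_ball_one_add_div_norm_smul hx (by positivity) hy
    have := lt_norm_of_mem_ball_one_add_div_norm_smul hx (by positivity) hy
    constructor <;> linarith
  have hshell : ENNReal.ofReal (δ / 4 * r ^ (n - 1) * ω) ≤ volume A := by
    have := le_addHaar_ball_sdiff_closedBall volume (0 : Euc n) (h := δ / 4) (by positivity) hr.le
    rwa [finrank_euclideanSpace_fin, ← ENNReal.ofReal_toReal measure_ball_lt_top.ne,
      ← ENNReal.ofReal_mul (by positivity)] at this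
  have hbound := mul_mul_le_setLIntegral_setLIntegral (μ := volume)
    (f := fun x y => ENNReal.ofReal (K x y)) (E := ball (0 : Euc n) r) (F := (ball 0 r)ᶜ)
    (measurableSet_ball.diff measurableSet_closedBall) (fun _ => measurableSet_ball)
    Set.sdiff_subset
    (fun x hx y hy => by
      obtain ⟨-, hy⟩ := hpair x hx y hy
      simpa using hy.le)
    (fun x hx y hy => by
      obtain ⟨hxy, hy⟩ := hpair x hx y hy
      refine ENNReal.ofReal_le_ofReal (hK.div_rpow_le ?_ hxy.le hxy)
      have hx : ‖x‖ < r := mem_ball_zero_iff.mp hx.1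
      exact ne_of_apply_ne norm (by linarith))
    (fun _ _ => (volume_ball_euc _ (by positivity)).ge)
    hshell
  rw [← hω_def] at hbound
  refine le_trans (le_of_eq ?_) hbound
  rw [← ENNReal.ofReal_mul (by positivity), ← ENNReal.ofReal_mul (by positivity),
    ← Nat.cast_pred (Nat.pos_of_ne_zero hn), Real.rpow_natCast]
  congr 1
  ring

end IsAdmissibleKernel

/-- Isoperimetric lower bound for the kernel `K`. -/
theorem isoperimetric_lower_bound
    (n : ℕ) (hn : 1 ≤ n) (s₁ s₂ δ κ₁ κ₂ κ₃ : ℝ)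
    (K : Euc n → Euc n → ℝ) (hK : IsAdmissibleKernel n s₁ s₂ δ κ₁ κ₂ κ₃ K) :
    ∃ C : ℝ, 0 < C ∧
      ∀ r : ℝ,
        (0 < r → r ≤ δ / 4 →
          ENNReal.ofReal (C * r ^ ((n : ℝ) - 2 * s₁))
            ≤ ∫⁻ x in Metric.ball (0 : Euc n) r,
                ∫⁻ y in (Metric.ball (0 : Euc n) r)ᶜ, ENNReal.ofReal (K x y)) ∧
        (δ / 4 < r →
          ENNReal.ofReal (C * r ^ ((n : ℝ) - 1))
            ≤ ∫⁻ x in Metric.ball (0 : Euc n) r,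
                ∫⁻ y in (Metric.ball (0 : Euc n) r)ᶜ, ENNReal.ofReal (K x y)) := by
  obtain ⟨C₁, hC₁, hsmall⟩ := hK.exists_le_kernelPerimeter_ball_of_le (by omega)
  obtain ⟨C₂, hC₂, hlarge⟩ := hK.exists_le_kernelPerimeter_ball_of_gt (by omega)
  have hδ := hK.δ_pos
  refine ⟨min C₁ C₂, lt_min hC₁ hC₂, fun r => ⟨fun hr hrδ => ?_, fun hr => ?_⟩⟩
  · refine le_trans (ENNReal.ofReal_le_ofReal ?_) (hsmall r hr hrδ)
    exact mul_le_mul_of_nonneg_right (min_le_left _ _) (Real.rpow_nonneg hr.le _)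
  · refine le_trans (ENNReal.ofReal_le_ofReal ?_) (hlarge r hr)
    exact mul_le_mul_of_nonneg_right (min_le_right _ _) (Real.rpow_nonneg (by linarith) _)
end
end
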